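/- (Remark: the Moutard transformation of Proposition 1 is a gauge transformation.) Let D ⊆ ℂ be open, let A, Ψ, F, F⁺, ω̂_{F,F⁺}, Λ : D → Matrix (Fin N) (Fin N) ℂ be real-differentiable, and assume on D: (i) ∂_z̄ Ψ + A·Ψ = 0 and ∂_z̄ F + A·F = 0; (ii) ∂_z̄ ω̂_{F,F⁺} = F⁺·F; (iii) ω̂_{F,F⁺}(z) is invertible for every z ∈ D; (iv) ∂_z̄ Λ = Λ·A + F⁺. Define g = 1 − F · ω̂_{F,F⁺}⁻¹ · Λ (where 1 is the identity matrix) and Ã = A + F · ω̂_{F,F⁺}⁻¹ · F⁺. Then ∂_z̄ (g·Ψ) + Ã·(g·Ψ) = 0 on D. -/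

import Mathlib

open Complex Matrix

/-- Entrywise Wirtinger derivative ∂_z f = (1/2)(∂f/∂x − i ∂f/∂y). -/
noncomputable def wDz {N : ℕ} (f : ℂ → Matrix (Fin N) (Fin N) ℂ) (z : ℂ) :
    Matrix (Fin N) (Fin N) ℂ :=
  Matrix.of fun i j =>
    (1 / 2 : ℂ) * (fderiv ℝ (fun w => f w i j) z 1
      - Complex.I * fderiv ℝ (fun w => f w i j) z Complex.I)

/-- Entrywise Wirtinger derivative ∂_z̄ f = (1/2)(∂f/∂x + i ∂f/∂y). -/
noncomputable def wDzbar {N : ℕ} (f : ℂ → Matrix (Fin N) (Fin N) ℂ) (z : ℂ) :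
    Matrix (Fin N) (Fin N) ℂ :=
  Matrix.of fun i j =>
    (1 / 2 : ℂ) * (fderiv ℝ (fun w => f w i j) z 1
      + Complex.I * fderiv ℝ (fun w => f w i j) z Complex.I)

/-- Real-differentiability, entrywise, at every point of `D`. -/
def MatDiffOn {N : ℕ} (f : ℂ → Matrix (Fin N) (Fin N) ℂ) (D : Set ℂ) : Prop :=
  ∀ z ∈ D, ∀ i j, DifferentiableAt ℝ (fun w => f w i j) z

/-- Entrywise complex conjugate of a matrix. -/
def mconj {N : ℕ} (M : Matrix (Fin N) (Fin N) ℂ) : Matrix (Fin N) (Fin N) ℂ :=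
  M.map (starRingEnd ℂ)


/-!
The derivation `∂_z̄` obeys the Leibniz rule for matrix products, and differentiating
`ω · ω⁻¹ = 1` gives `∂_z̄ ω⁻¹ = -ω⁻¹ (∂_z̄ ω) ω⁻¹ = -ω⁻¹ F⁺ F ω⁻¹`. Expanding `∂_z̄ (g Ψ)` with these rules
and substituting the equations for `Ψ`, `F` and `Λ`, every term cancels against `Ã g Ψ`:
`g` intertwines `∂_z̄ + A` with `∂_z̄ + Ã`.
-/

/-- The scalar Wirtinger derivative `∂_z̄`; `wDzbar` applies it entrywise. -/
noncomputable def dbar (f : ℂ → ℂ) (z : ℂ) : ℂ :=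
  (1 / 2 : ℂ) * (fderiv ℝ f z 1 + I * fderiv ℝ f z I)

section Scalar

variable {f g : ℂ → ℂ} {z : ℂ}

lemma dbar_congr (h : f =ᶠ[nhds z] g) : dbar f z = dbar g z := by
  rw [dbar, dbar, h.fderiv_eq]

lemma dbar_const (c z : ℂ) : dbar (fun _ => c) z = 0 := by
  simp [dbar]

lemma dbar_sum {ι : Type*} (s : Finset ι) (f : ι → ℂ → ℂ)
    (hf : ∀ i ∈ s, DifferentiableAt ℝ (f i) z) :
    dbar (fun w => ∑ i ∈ s, f i w) z = ∑ i ∈ s, dbar (f i) z := by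
  simp only [dbar, fderiv_fun_sum hf, _root_.sum_apply, Finset.mul_sum,
    ← Finset.sum_add_distrib]

lemma dbar_mul (hf : DifferentiableAt ℝ f z) (hg : DifferentiableAt ℝ g z) :
    dbar (fun w => f w * g w) z = dbar f z * g z + f z * dbar g z := by
  simp only [dbar, fderiv_fun_mul hf hg, _root_.add_apply, _root_.smul_apply, smul_eq_mul]
  ring

lemma dbar_sub (hf : DifferentiableAt ℝ f z) (hg : DifferentiableAt ℝ g z) :
    dbar (fun w => f w - g w) z = dbar f z - dbar g z := by
  simp only [dbar, fderiv_fun_sub hf hg, _root_.sub_apply]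
  ring

end Scalar

/-- `MatDiffOn f D` unfolds to `∀ z ∈ D, MatDiffAt f z`. -/
def MatDiffAt {m n : Type*} (f : ℂ → Matrix m n ℂ) (z : ℂ) : Prop :=
  ∀ i j, DifferentiableAt ℝ (fun w => f w i j) z

namespace MatDiffAt

variable {l m n : Type*} {z : ℂ}

lemma const (c : Matrix m n ℂ) (z : ℂ) : MatDiffAt (fun _ => c) z :=
  fun _ _ => differentiableAt_const _

lemma sub {f g : ℂ → Matrix m n ℂ} (hf : MatDiffAt f z) (hg : MatDiffAt g z) :
    MatDiffAt (fun w => f w - g w) z :=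
  fun i j => (hf i j).sub (hg i j)

lemma mul [Fintype l] {f : ℂ → Matrix m l ℂ} {g : ℂ → Matrix l n ℂ}
    (hf : MatDiffAt f z) (hg : MatDiffAt g z) : MatDiffAt (fun w => f w * g w) z := by
  intro i j
  simp only [Matrix.mul_apply]
  exact DifferentiableAt.fun_sum fun k _ => (hf i k).mul (hg k j)

variable [Fintype n] [DecidableEq n] {f : ℂ → Matrix n n ℂ}

lemma det (hf : MatDiffAt f z) : DifferentiableAt ℝ (fun w => (f w).det) z := by
  simp only [Matrix.det_apply, Units.smul_def, zsmul_eq_mul]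
  exact DifferentiableAt.fun_sum fun σ _ =>
    (HasFDerivAt.finsetProd fun i _ => (hf (σ i) i).hasFDerivAt).differentiableAt.const_mul _

lemma adjugate (hf : MatDiffAt f z) : MatDiffAt (fun w => (f w).adjugate) z := by
  intro i j
  simp only [Matrix.adjugate_apply]
  refine MatDiffAt.det (fun k l => ?_)
  simp only [Matrix.updateRow_apply]
  split_ifs
  · exact differentiableAt_const _
  · exact hf k l

lemma inv (hf : MatDiffAt f z) (hfz : IsUnit (f z)) : MatDiffAt (fun w => (f w)⁻¹) z := by
  have hdet : (f z).det ≠ 0 := ((f z).isUnit_iff_isUnit_det.mp hfz).ne_zero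
  intro i j
  simp only [Matrix.inv_def, Matrix.smul_apply, Ring.inverse_eq_inv', smul_eq_mul]
  exact (hf.det.inv hdet).mul (hf.adjugate i j)

end MatDiffAt

section MatrixWirtinger

variable {N : ℕ} {f g : ℂ → Matrix (Fin N) (Fin N) ℂ} {z : ℂ}

lemma wDzbar_apply (f : ℂ → Matrix (Fin N) (Fin N) ℂ) (z : ℂ) (i j : Fin N) :
    wDzbar f z i j = dbar (fun w => f w i j) z := rfl

lemma wDzbar_congr (h : f =ᶠ[nhds z] g) : wDzbar f z = wDzbar g z := by
  ext i j
  exact dbar_congr (h.mono fun w hw => congr_fun₂ hw i j)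

lemma wDzbar_const (c : Matrix (Fin N) (Fin N) ℂ) (z : ℂ) : wDzbar (fun _ => c) z = 0 := by
  ext i j
  exact dbar_const _ _

lemma wDzbar_sub (hf : MatDiffAt f z) (hg : MatDiffAt g z) :
    wDzbar (fun w => f w - g w) z = wDzbar f z - wDzbar g z := by
  ext i j
  exact dbar_sub (hf i j) (hg i j)

lemma wDzbar_mul (hf : MatDiffAt f z) (hg : MatDiffAt g z) :
    wDzbar (fun w => f w * g w) z = wDzbar f z * g z + f z * wDzbar g z := by
  ext i j
  simp only [Matrix.add_apply, Matrix.mul_apply, wDzbar_apply, ← Finset.sum_add_distrib]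
  rw [dbar_sum _ (fun k w => f w i k * g w k j) fun k _ => (hf i k).mul (hg k j)]
  exact Finset.sum_congr rfl fun k _ => dbar_mul (hf i k) (hg k j)

lemma wDzbar_inv (hf : MatDiffAt f z) (hfz : IsUnit (f z)) :
    wDzbar (fun w => (f w)⁻¹) z = -((f z)⁻¹ * wDzbar f z * (f z)⁻¹) := by
  have hdet : (f z).det ≠ 0 := ((f z).isUnit_iff_isUnit_det.mp hfz).ne_zero
  have hunit_near : ∀ᶠ w in nhds z, f w * (f w)⁻¹ = 1 :=
    (hf.det.continuousAt.eventually_ne hdet).mono fun w hw =>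
      Matrix.mul_nonsing_inv _ hw.isUnit
  have hleibniz : wDzbar f z * (f z)⁻¹ + f z * wDzbar (fun w => (f w)⁻¹) z = 0 := by
    rw [← wDzbar_mul hf (hf.inv hfz), wDzbar_congr hunit_near, wDzbar_const]
  calc wDzbar (fun w => (f w)⁻¹) z
      = (f z)⁻¹ * (f z * wDzbar (fun w => (f w)⁻¹) z) := by
        rw [← Matrix.mul_assoc, Matrix.nonsing_inv_mul _ hdet.isUnit, Matrix.one_mul]
    _ = -((f z)⁻¹ * wDzbar f z * (f z)⁻¹) := by
        rw [eq_neg_of_add_eq_zero_right hleibniz]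
        noncomm_ring

end MatrixWirtinger

theorem moutard_is_gauge_general {N : ℕ} (D : Set ℂ)
    (A Ψ F Fp ωFF Λ : ℂ → Matrix (Fin N) (Fin N) ℂ)
    (hΨ : MatDiffOn Ψ D) (hF : MatDiffOn F D)
    (hωFF : MatDiffOn ωFF D) (hΛ : MatDiffOn Λ D)
    (hΨsys : ∀ z ∈ D, wDzbar Ψ z + A z * Ψ z = 0)
    (hFsys : ∀ z ∈ D, wDzbar F z + A z * F z = 0)
    (hωFFzbar : ∀ z ∈ D, wDzbar ωFF z = Fp z * F z)
    (hinv : ∀ z ∈ D, IsUnit (ωFF z))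
    (hΛsys : ∀ z ∈ D, wDzbar Λ z = Λ z * A z + Fp z) :
    ∀ z ∈ D,
      wDzbar (fun w => (1 - F w * (ωFF w)⁻¹ * Λ w) * Ψ w) z
        + (A z + F z * (ωFF z)⁻¹ * Fp z)
          * ((1 - F z * (ωFF z)⁻¹ * Λ z) * Ψ z) = 0 := by
  intro z hz
  have hΨz : MatDiffAt Ψ z := hΨ z hz
  have hFz : MatDiffAt F z := hF z hz
  have hωz : MatDiffAt ωFF z := hωFF z hz
  have hΛz : MatDiffAt Λ z := hΛ z hz
  have hωinv : MatDiffAt (fun w => (ωFF w)⁻¹) z := hωz.inv (hinv z hz)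
  have hFω : MatDiffAt (fun w => F w * (ωFF w)⁻¹) z := hFz.mul hωinv
  have hFωΛ : MatDiffAt (fun w => F w * (ωFF w)⁻¹ * Λ w) z := hFω.mul hΛz
  rw [wDzbar_mul ((MatDiffAt.const 1 z).sub hFωΛ) hΨz, wDzbar_sub (MatDiffAt.const 1 z) hFωΛ,
    wDzbar_const, wDzbar_mul hFω hΛz, wDzbar_mul hFz hωinv,
    wDzbar_inv hωz (hinv z hz), hωFFzbar z hz, hΛsys z hz,
    eq_neg_of_add_eq_zero_left (hFsys z hz), eq_neg_of_add_eq_zero_left (hΨsys z hz)]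
  noncomm_ring

/-- Remark: with g = 1 − F·ω̂_{F,F⁺}⁻¹·Λ, ∂_z̄ Λ = Λ·A + F⁺, and
Ã = A + F·ω̂_{F,F⁺}⁻¹·F⁺, one has ∂_z̄ (g·Ψ) + Ã·(g·Ψ) = 0. -/
theorem moutard_is_gauge {N : ℕ} (D : Set ℂ) (hD : IsOpen D)
    (A Ψ F Fp ωFF Λ : ℂ → Matrix (Fin N) (Fin N) ℂ)
    (hA : MatDiffOn A D) (hΨ : MatDiffOn Ψ D) (hF : MatDiffOn F D)
    (hFp : MatDiffOn Fp D) (hωFF : MatDiffOn ωFF D) (hΛ : MatDiffOn Λ D)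
    (hΨsys : ∀ z ∈ D, wDzbar Ψ z + A z * Ψ z = 0)
    (hFsys : ∀ z ∈ D, wDzbar F z + A z * F z = 0)
    (hωFFzbar : ∀ z ∈ D, wDzbar ωFF z = Fp z * F z)
    (hinv : ∀ z ∈ D, IsUnit (ωFF z))
    (hΛsys : ∀ z ∈ D, wDzbar Λ z = Λ z * A z + Fp z) :
    ∀ z ∈ D,
      wDzbar (fun w => (1 - F w * (ωFF w)⁻¹ * Λ w) * Ψ w) z
        + (A z + F z * (ωFF z)⁻¹ * Fp z)
          * ((1 - F z * (ωFF z)⁻¹ * Λ z) * Ψ z) = 0 :=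
  moutard_is_gauge_general D A Ψ F Fp ωFF Λ hΨ hF hωFF hΛ hΨsys hFsys hωFFzbar hinv hΛsys
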